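/- Let H and H' be rank one subgroups of ℝ (nontrivial subgroups in which any two nonzero elements have rational ratio), and let F_H, F_{H'} : C → Sets be the functors on the scaling-site category C given on objects by F_H(Ω) = Ω ∩ H_{>0} and F_{H'}(Ω) = Ω ∩ H'_{>0}, and on a morphism n : Ω → Ω' by λ ↦ nλ. If F_H and F_{H'} are naturally isomorphic, then H = H'. Consequently the map H ↦ F_H is an injection from the set of rank one subgroups of ℝ into the isomorphism classes of points of the scaling topos. -/

import Mathlib

open CategoryTheory

/-- An object of the scaling-site category `C`: a (possibly empty) bounded open interval
`Ω ⊆ [0,∞)`. -/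
structure ScObj : Type where
  s : Set ℝ
  isInterval : ∃ a b : ℝ, s = Set.Ioo a b
  nonneg : s ⊆ Set.Ici 0

/-- The scaling-site category: a morphism `Ω → Ω'` is (the action on `Ω` of) a positive
integer `n` with `nΩ ⊆ Ω'`; for `Ω = ∅` all integers give the same (empty) map, so the empty
interval is an initial object. -/
instance : Category ScObj where
  Hom Ω Ω' := {φ : Ω.s → Ω'.s // ∃ n : ℕ+, ∀ x : Ω.s, (φ x : ℝ) = (n : ℝ) * (x : ℝ)}
  id Ω := ⟨fun x => x, 1, fun x => by simp⟩
  comp {Ω₁ Ω₂ Ω₃} f g := ⟨fun x => g.1 (f.1 x), by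
    obtain ⟨n, hn⟩ := f.2
    obtain ⟨m, hm⟩ := g.2
    exact ⟨m * n, fun x => by rw [hm, hn]; push_cast; ring⟩⟩
  id_comp f := rfl
  comp_id f := rfl
  assoc f g h := rfl

/-- A rank one subgroup of `ℝ`: a nontrivial subgroup in which any two elements (the second
nonzero) have rational ratio. -/
def RankOne (H : AddSubgroup ℝ) : Prop :=
  H ≠ ⊥ ∧ ∀ a ∈ H, ∀ b ∈ H, b ≠ 0 → ∃ q : ℚ, a = (q : ℝ) * b

/-- The flat continuous functor `F_H : C → Sets`, `F_H(Ω) = Ω ∩ H_{>0}`, a morphism `n`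
acting by `λ ↦ nλ`. -/
noncomputable def FH (H : AddSubgroup ℝ) : ScObj ⥤ Type where
  obj Ω := {x : ℝ // x ∈ Ω.s ∧ x ∈ H ∧ 0 < x}
  map {Ω Ω'} φ := TypeCat.ofHom fun x =>
    ⟨(φ.1 ⟨x.1, x.2.1⟩ : ℝ), (φ.1 ⟨x.1, x.2.1⟩).2, by
      obtain ⟨n, hn⟩ := φ.2
      rw [hn ⟨x.1, x.2.1⟩]
      constructor
      · have : ((n : ℕ) : ℝ) * x.1 = (n : ℕ) • x.1 := (nsmul_eq_mul _ _).symm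
        rw [show ((n : ℕ+) : ℝ) = ((n : ℕ) : ℝ) from rfl, this]
        exact AddSubgroup.nsmul_mem H x.2.2.1 _
      · have hn0 : (0 : ℝ) < (n : ℝ) := by exact_mod_cast n.pos
        exact mul_pos hn0 x.2.2.2⟩


private lemma fh_key (H H' : AddSubgroup ℝ) (η : FH H ⟶ FH H') {l : ℝ}
    (hpos : 0 < l) (hmem : l ∈ H) : l ∈ H' := by
  -- the family of shrinking intervals around `l`
  let O : ℝ → ScObj := fun ε =>
    ⟨Set.Ioo (max 0 (l - ε)) (l + ε), ⟨_, _, rfl⟩,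
     fun x hx => le_of_lt (lt_of_le_of_lt (le_max_left 0 (l - ε)) hx.1)⟩
  have hmemO : ∀ ε : ℝ, 0 < ε → l ∈ (O ε).s := by
    intro ε hε
    constructor
    · exact max_lt hpos (by linarith)
    · linarith
  let e : ∀ ε : ℝ, 0 < ε → (FH H).obj (O ε) := fun ε hε =>
    (⟨l, hmemO ε hε, hmem, hpos⟩ : {x : ℝ // x ∈ (O ε).s ∧ x ∈ H ∧ 0 < x})
  have hsub : ∀ ε : ℝ, 0 < ε → ε ≤ 1 → (O ε).s ⊆ (O 1).s := by
    intro ε hε hε1 x hx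
    obtain ⟨hx1, hx2⟩ := hx
    constructor
    · exact lt_of_le_of_lt (max_le_max le_rfl (by linarith)) hx1
    · linarith
  let ι : ∀ ε : ℝ, 0 < ε → ε ≤ 1 → (O ε ⟶ O 1) := fun ε hε hε1 =>
    ⟨fun x => ⟨x.1, hsub ε hε hε1 x.2⟩, 1, fun x => by simp⟩
  set z : ℝ := Subtype.val (η.app (O 1) (e 1 one_pos)) with hz
  have hzH' : z ∈ H' := (Subtype.property (η.app (O 1) (e 1 one_pos))).2.1
  have hclose : ∀ ε : ℝ, 0 < ε → ε ≤ 1 → z ∈ (O ε).s := by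
    intro ε hε hε1
    have hnat := FunctorToTypes.naturality η (ι ε hε hε1) (e ε hε)
    have hmap : (FH H).map (ι ε hε hε1) (e ε hε) = e 1 one_pos := Subtype.ext rfl
    have : z = Subtype.val (η.app (O ε) (e ε hε)) := by
      rw [hz, ← hmap, hnat]; rfl
    rw [this]
    exact (Subtype.property (η.app (O ε) (e ε hε))).1
  have hzl : z = l := by
    by_contra hne
    have habs : 0 < |z - l| := abs_pos.mpr (sub_ne_zero.mpr hne)
    set ε := min |z - l| 1 with hε
    have hε0 : 0 < ε := lt_min habs one_pos
    have hε1 : ε ≤ 1 := min_le_right _ _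
    obtain ⟨h1, h2⟩ := hclose ε hε0 hε1
    have h1' : l - ε < z := lt_of_le_of_lt (le_max_right 0 (l - ε)) h1
    have : |z - l| < ε := abs_sub_lt_iff.mpr ⟨by linarith, by linarith⟩
    have : |z - l| < |z - l| := lt_of_lt_of_le this (min_le_left _ _)
    exact lt_irrefl _ this
  rwa [hzl] at hzH'

/-- STATEMENT 15: if the functors `F_H` and `F_{H'}` associated to rank one subgroups
`H, H' ⊆ ℝ` are naturally isomorphic, then `H = H'`; so `H ↦ F_H` is injective on
isomorphism classes of points of the scaling topos. -/
theorem statement15 (H H' : AddSubgroup ℝ) (hH : RankOne H) (hH' : RankOne H')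
    (h : Nonempty (FH H ≅ FH H')) : H = H' := by
  obtain ⟨η⟩ := h
  ext x
  have fwd : ∀ y : ℝ, y ∈ H → 0 < y → y ∈ H' := fun y hy hp => fh_key H H' η.hom hp hy
  have bwd : ∀ y : ℝ, y ∈ H' → 0 < y → y ∈ H := fun y hy hp => fh_key H' H η.inv hp hy
  constructor
  · intro hx
    rcases lt_trichotomy x 0 with hx0 | hx0 | hx0
    · have := fwd (-x) (neg_mem hx) (by linarith)
      simpa using neg_mem this
    · exact hx0 ▸ zero_mem _
    · exact fwd x hx hx0
  · intro hx
    rcases lt_trichotomy x 0 with hx0 | hx0 | hx0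
    · have := bwd (-x) (neg_mem hx) (by linarith)
      simpa using neg_mem this
    · exact hx0 ▸ zero_mem _
    · exact bwd x hx hx0
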